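/- For any two finite simple graphs F¹ and F² and any integer d ≥ 1, the d-measure of their disjoint union satisfies 𝓗^d(F¹ ⊔ F²) = 𝓗^d(F¹) + 𝓗^d(F²), where the equation is read in the extended nonnegative reals (so if either side involves +∞, both sides equal +∞). -/

import Mathlib

/-- An embedding of a finite simple graph `G` into a `d`-dimensional space: an injective
map `η` from the vertices to `d`-tuples of natural numbers such that two vertices are
adjacent iff their images differ in every coordinate. -/
def IsSpaceEmbedding {V : Type*} (G : SimpleGraph V) (d : ℕ) (η : V → Fin d → ℕ) : Prop :=
  Function.Injective η ∧ ∀ u v : V, G.Adj u v ↔ ∀ k, η u k ≠ η v k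

/-- The hyper-rectangle `R(J₁,…,J_d)`: the set of `d`-tuples whose `k`-th coordinate lies
in `J k`. -/
def rect {d : ℕ} (J : Fin d → Finset ℕ) : Set (Fin d → ℕ) := {x | ∀ k, x k ∈ J k}

/-- The volume `|J₁|⋯|J_d|` of the hyper-rectangle `R(J₁,…,J_d)`. -/
def rvol {d : ℕ} (J : Fin d → Finset ℕ) : ℕ := ∏ k, (J k).card

/-- A rectangle co-cover of an embedding `η` of `G`: a finite family of pairwise disjoint
hyper-rectangles (with all sides nonempty) whose union contains `η(V(G))` and such that
every pair of distinct non-adjacent vertices has both images in a common hyper-rectangle. -/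
def IsRectCoCover {V : Type*} (G : SimpleGraph V) {d m : ℕ}
    (η : V → Fin d → ℕ) (R : Fin m → Fin d → Finset ℕ) : Prop :=
  (∀ i k, (R i k).Nonempty) ∧
  (∀ i j : Fin m, i ≠ j → Disjoint (rect (R i)) (rect (R j))) ∧
  (∀ v : V, ∃ i, η v ∈ rect (R i)) ∧
  (∀ u v : V, u ≠ v → ¬ G.Adj u v → ∃ i, η u ∈ rect (R i) ∧ η v ∈ rect (R i))

/-- The `d`-volume `vol^d(G)`: the minimum over all embeddings of `G` into a
`d`-dimensional space and all rectangle co-covers of the embedding of the total volume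
of the co-cover. -/
noncomputable def dVol {V : Type*} (G : SimpleGraph V) (d : ℕ) : ℕ :=
  sInf {s | ∃ η : V → Fin d → ℕ, IsSpaceEmbedding G d η ∧
    ∃ (m : ℕ) (R : Fin m → Fin d → Finset ℕ),
      IsRectCoCover G η R ∧ s = ∑ i, rvol (R i)}

/-- The disjoint union of two simple graphs, on the sum of their vertex types. -/
def disjUnionGraph {V₁ V₂ : Type*} (G₁ : SimpleGraph V₁) (G₂ : SimpleGraph V₂) :
    SimpleGraph (V₁ ⊕ V₂) where
  Adj a b := Sum.LiftRel G₁.Adj G₂.Adj a b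
  symm := by
    constructor
    intro a b h
    cases h with
    | inl h => exact Sum.LiftRel.inl h.symm
    | inr h => exact Sum.LiftRel.inr h.symm
  loopless := by
    constructor
    intro a h
    cases h with
    | inl h => exact G₁.irrefl h
    | inr h => exact G₂.irrefl h

open Classical in
/-- The `d`-measure of a finite simple graph `F`: `vol^d(F̄)` if the complement of `F`
admits an embedding into a `d`-dimensional space, and `+∞` otherwise. -/
noncomputable def graphMeasure {V : Type*} (F : SimpleGraph V) (d : ℕ) : ENNReal :=
  if ∃ η : V → Fin d → ℕ, IsSpaceEmbedding Fᶜ d η then ((dVol Fᶜ d : ℕ) : ENNReal) else ⊤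

/-!
The complement of `F₁ ⊔ F₂` is the join of `F₁ᶜ` and `F₂ᶜ`. Given embeddings and co-covers of
`F₁ᶜ` and `F₂ᶜ`, shift the second one beyond the first in every coordinate: then every vertex of
one part differs from every vertex of the other in all coordinates, and the two co-covers side by
side form a co-cover of the join, so `vol(join) ≤ vol(F₁ᶜ) + vol(F₂ᶜ)`.

Conversely, in an embedding of the join the two parts take disjoint sets of values in each
coordinate. Inside a rectangle `J`, the bounding boxes `A`, `B` of the points of the two parts
therefore satisfy `|A k| + |B k| ≤ |J k|` in one coordinate and `A k, B k ⊆ J k` in all, whence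
`vol A + vol B ≤ vol J`. Shrinking every rectangle of an optimal co-cover to these boxes yields
co-covers of `F₁ᶜ` and `F₂ᶜ`, so `vol(F₁ᶜ) + vol(F₂ᶜ) ≤ vol(join)`.
-/

open Finset

lemma exists_forall_mem_lt_of_finset {ι κ : Type*} [Fintype ι] [Fintype κ]
    (R : ι → κ → Finset ℕ) : ∃ N, ∀ i k, ∀ a ∈ R i k, a < N := by
  obtain ⟨N, hN⟩ := exists_nat_subset_range (univ.biUnion fun i => univ.biUnion (R i))
  exact ⟨N, fun i k a ha =>
    mem_range.1 (hN (mem_biUnion.2 ⟨i, mem_univ i, mem_biUnion.2 ⟨k, mem_univ k, ha⟩⟩))⟩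

section CoCover

variable {V W : Type*} {G : SimpleGraph V} {H : SimpleGraph W} {d m : ℕ}

lemma IsSpaceEmbedding.comp {η : W → Fin d → ℕ} (hη : IsSpaceEmbedding H d η) (f : G ↪g H) :
    IsSpaceEmbedding G d (η ∘ f) :=
  ⟨hη.1.comp f.injective, fun u v => f.map_adj_iff.symm.trans (hη.2 (f u) (f v))⟩

lemma IsRectCoCover.comp {η : W → Fin d → ℕ} {R : Fin m → Fin d → Finset ℕ}
    (hR : IsRectCoCover H η R) (f : G ↪g H) : IsRectCoCover G (η ∘ f) R :=
  ⟨hR.1, hR.2.1, fun v => hR.2.2.1 (f v), fun u v huv hadj =>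
    hR.2.2.2 (f u) (f v) (f.injective.ne huv) (mt f.map_adj_iff.mp hadj)⟩

lemma nonempty_of_mem_rect {J : Fin d → Finset ℕ} {x : Fin d → ℕ} (hx : x ∈ rect J) (k : Fin d) :
    (J k).Nonempty :=
  ⟨x k, hx k⟩

lemma exists_isRectCoCover_of_sum_rvol_le {η : V → Fin d → ℕ} {R : Fin m → Fin d → Finset ℕ}
    (hdisj : ∀ i j, i ≠ j → Disjoint (rect (R i)) (rect (R j)))
    (hcover : ∀ v, ∃ i, η v ∈ rect (R i))
    (hpair : ∀ u v, u ≠ v → ¬ G.Adj u v → ∃ i, η u ∈ rect (R i) ∧ η v ∈ rect (R i)) :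
    ∃ (n : ℕ) (R' : Fin n → Fin d → Finset ℕ),
      IsRectCoCover G η R' ∧ ∑ i, rvol (R' i) ≤ ∑ i, rvol (R i) := by
  classical
  set s : Finset (Fin m) := univ.filter fun i => ∀ k, (R i k).Nonempty
  set e : Fin s.card ≃ s := s.equivFin.symm
  have hreach : ∀ i v, η v ∈ rect (R i) → ∃ j, (e j : Fin m) = i := fun i v hv =>
    ⟨s.equivFin ⟨i, mem_filter.2 ⟨mem_univ i, nonempty_of_mem_rect hv⟩⟩, by simp [e]⟩
  refine ⟨s.card, fun j => R (e j), ⟨fun j => (mem_filter.1 (e j).2).2,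
    fun j j' hjj' => hdisj _ _ (Subtype.coe_injective.ne (e.injective.ne hjj')), ?_, ?_⟩, ?_⟩
  · intro v
    obtain ⟨i, hi⟩ := hcover v
    obtain ⟨j, rfl⟩ := hreach i v hi
    exact ⟨j, hi⟩
  · intro u v huv hadj
    obtain ⟨i, hu, hv⟩ := hpair u v huv hadj
    obtain ⟨j, rfl⟩ := hreach i u hu
    exact ⟨j, hu, hv⟩
  · calc ∑ j, rvol (R (e j)) = ∑ i ∈ s, rvol (R i) := by
          rw [← sum_coe_sort s]; exact e.sum_comp fun i => rvol (R i)
      _ ≤ ∑ i, rvol (R i) := sum_le_univ_sum_of_nonneg fun _ => Nat.zero_le _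

lemma exists_isRectCoCover [Fintype V] (η : V → Fin d → ℕ) :
    ∃ (m : ℕ) (R : Fin m → Fin d → Finset ℕ), IsRectCoCover G η R := by
  obtain ⟨m, R, hR, -⟩ := exists_isRectCoCover_of_sum_rvol_le (G := G) (η := η)
    (R := fun (_ : Fin 1) k => univ.image (η · k))
    (fun i j hij => absurd (Subsingleton.elim i j) hij)
    (fun v => ⟨0, fun k => mem_image_of_mem _ (mem_univ v)⟩)
    (fun u v _ _ => ⟨0, fun k => mem_image_of_mem _ (mem_univ u),
      fun k => mem_image_of_mem _ (mem_univ v)⟩)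
  exact ⟨m, R, hR⟩

lemma dVol_le {η : V → Fin d → ℕ} {R : Fin m → Fin d → Finset ℕ}
    (hη : IsSpaceEmbedding G d η) (hR : IsRectCoCover G η R) : dVol G d ≤ ∑ i, rvol (R i) :=
  Nat.sInf_le ⟨η, hη, m, R, hR, rfl⟩

lemma exists_dVol_eq [Fintype V] (hG : ∃ η, IsSpaceEmbedding G d η) :
    ∃ (η : V → Fin d → ℕ) (m : ℕ) (R : Fin m → Fin d → Finset ℕ),
      IsSpaceEmbedding G d η ∧ IsRectCoCover G η R ∧ dVol G d = ∑ i, rvol (R i) := by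
  obtain ⟨η, hη⟩ := hG
  obtain ⟨m, R, hR⟩ := exists_isRectCoCover (G := G) η
  obtain ⟨η', hη', m', R', hR', hvol⟩ : dVol G d ∈ _ := Nat.sInf_mem ⟨_, η, hη, m, R, hR, rfl⟩
  exact ⟨η', m', R', hη', hR', hvol⟩

end CoCover

section Trace

variable {V : Type*} [Fintype V] {d m : ℕ}

def rectTrace (η : V → Fin d → ℕ) (J : Fin d → Finset ℕ) : Fin d → Finset ℕ :=
  fun k => (univ.filter fun v => ∀ j, η v j ∈ J j).image fun v => η v k

lemma rectTrace_subset (η : V → Fin d → ℕ) (J : Fin d → Finset ℕ) (k : Fin d) :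
    rectTrace η J k ⊆ J k := by
  intro a ha
  obtain ⟨v, hv, rfl⟩ := mem_image.1 ha
  exact (mem_filter.1 hv).2 k

lemma mem_rect_rectTrace {η : V → Fin d → ℕ} {J : Fin d → Finset ℕ} {v : V}
    (hv : η v ∈ rect J) : η v ∈ rect (rectTrace η J) :=
  fun _ => mem_image_of_mem _ (mem_filter.2 ⟨mem_univ v, hv⟩)

lemma dVol_le_sum_rvol_rectTrace {G : SimpleGraph V} {η : V → Fin d → ℕ}
    {R : Fin m → Fin d → Finset ℕ} (hη : IsSpaceEmbedding G d η) (hR : IsRectCoCover G η R) :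
    dVol G d ≤ ∑ i, rvol (rectTrace η (R i)) := by
  have hsub : ∀ i, rect (rectTrace η (R i)) ⊆ rect (R i) :=
    fun i x hx k => rectTrace_subset η (R i) k (hx k)
  obtain ⟨n, R', hR', hvol⟩ := exists_isRectCoCover_of_sum_rvol_le (G := G)
    (R := fun i => rectTrace η (R i))
    (fun i j hij => (hR.2.1 i j hij).mono (hsub i) (hsub j))
    (fun v => (hR.2.2.1 v).imp fun i => mem_rect_rectTrace)
    (fun u v huv hadj => (hR.2.2.2 u v huv hadj).imp fun i h =>
      ⟨mem_rect_rectTrace h.1, mem_rect_rectTrace h.2⟩)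
  exact (dVol_le hη hR').trans hvol

lemma rvol_add_rvol_le {A B J : Fin d → Finset ℕ} (k₀ : Fin d) (hA : ∀ k, A k ⊆ J k)
    (hB : ∀ k, B k ⊆ J k) (hAB : Disjoint (A k₀) (B k₀)) : rvol A + rvol B ≤ rvol J :=
  prod_add_prod_le' (mem_univ k₀)
    ((card_union_of_disjoint hAB).symm.trans_le (card_le_card (union_subset (hA k₀) (hB k₀))))
    (fun k _ _ => card_le_card (hA k)) (fun k _ _ => card_le_card (hB k))

lemma dVol_add_dVol_le {V₁ V₂ : Type*} [Fintype V₁] [Fintype V₂] {G₁ : SimpleGraph V₁}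
    {G₂ : SimpleGraph V₂} {H : SimpleGraph V} (hd : 0 < d) (f₁ : G₁ ↪g H) (f₂ : G₂ ↪g H)
    (hadj : ∀ u v, H.Adj (f₁ u) (f₂ v)) (hH : ∃ η, IsSpaceEmbedding H d η) :
    dVol G₁ d + dVol G₂ d ≤ dVol H d := by
  obtain ⟨η, m, R, hη, hR, hvol⟩ := exists_dVol_eq hH
  have hdisj : ∀ i, Disjoint (rectTrace (η ∘ f₁) (R i) ⟨0, hd⟩)
      (rectTrace (η ∘ f₂) (R i) ⟨0, hd⟩) := by
    intro i
    refine disjoint_left.2 fun a ha hb => ?_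
    obtain ⟨u, -, rfl⟩ := mem_image.1 ha
    obtain ⟨v, -, hv⟩ := mem_image.1 hb
    exact (hη.2 (f₁ u) (f₂ v)).1 (hadj u v) ⟨0, hd⟩ hv.symm
  calc dVol G₁ d + dVol G₂ d
      ≤ ∑ i, rvol (rectTrace (η ∘ f₁) (R i)) + ∑ i, rvol (rectTrace (η ∘ f₂) (R i)) :=
        add_le_add (dVol_le_sum_rvol_rectTrace (hη.comp f₁) (hR.comp f₁))
          (dVol_le_sum_rvol_rectTrace (hη.comp f₂) (hR.comp f₂))
    _ ≤ ∑ i, rvol (R i) := by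
        rw [← sum_add_distrib]
        exact sum_le_sum fun i _ => rvol_add_rvol_le ⟨0, hd⟩ (rectTrace_subset _ _)
          (rectTrace_subset _ _) (hdisj i)
    _ = dVol H d := hvol.symm

end Trace

section Join

open SimpleGraph

variable {V₁ V₂ : Type*} {F₁ : SimpleGraph V₁} {F₂ : SimpleGraph V₂} {d m₁ m₂ N : ℕ}

lemma disjUnionGraph_eq_sum (F₁ : SimpleGraph V₁) (F₂ : SimpleGraph V₂) :
    disjUnionGraph F₁ F₂ = F₁ ⊕g F₂ := by
  ext (u | u) (v | v) <;> simp [disjUnionGraph]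

lemma compl_sum_adj_inl_inr (u : V₁) (v : V₂) : (F₁ ⊕g F₂)ᶜ.Adj (.inl u) (.inr v) := by
  simp

def shiftRect (N : ℕ) (J : Fin d → Finset ℕ) : Fin d → Finset ℕ :=
  fun k => (J k).image (· + N)

lemma mem_rect_shiftRect {J : Fin d → Finset ℕ} {x : Fin d → ℕ} :
    x ∈ rect (shiftRect N J) ↔ ∀ k, N ≤ x k ∧ x k - N ∈ J k := by
  refine forall_congr' fun k => ⟨fun hx => ?_, fun hx => mem_image.2 ⟨x k - N, hx.2, ?_⟩⟩
  · obtain ⟨a, ha, hax⟩ := mem_image.1 hx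
    rw [← hax]
    simpa using ha
  · have := hx.1
    omega

lemma rvol_shiftRect (N : ℕ) (J : Fin d → Finset ℕ) : rvol (shiftRect N J) = rvol J :=
  prod_congr rfl fun _ _ => card_image_of_injective _ (add_left_injective N)

lemma isSpaceEmbedding_compl_sum {η₁ : V₁ → Fin d → ℕ} {η₂ : V₂ → Fin d → ℕ} (hd : 0 < d)
    (h₁ : IsSpaceEmbedding F₁ᶜ d η₁) (h₂ : IsSpaceEmbedding F₂ᶜ d η₂) (hN : ∀ v k, η₁ v k < N) :
    IsSpaceEmbedding (F₁ ⊕g F₂)ᶜ d (Sum.elim η₁ fun v k => η₂ v k + N) := by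
  have hcross : ∀ u v k, η₁ u k ≠ η₂ v k + N :=
    fun u v k => ((hN u k).trans_le (Nat.le_add_left N _)).ne
  refine ⟨?_, ?_⟩
  · rintro (u | u) (v | v) h
    · exact congrArg _ (h₁.1 h)
    · exact absurd (congrFun h ⟨0, hd⟩) (hcross u v _)
    · exact absurd (congrFun h ⟨0, hd⟩).symm (hcross v u _)
    · refine congrArg _ (h₂.1 (funext fun k => ?_))
      simpa using congrFun h k
  · rintro (u | u) (v | v)
    · simpa using h₁.2 u v
    · simpa using hcross u v
    · simpa [eq_comm] using hcross v u
    · simpa using h₂.2 u v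

lemma isRectCoCover_compl_sum {η₁ : V₁ → Fin d → ℕ} {η₂ : V₂ → Fin d → ℕ}
    {R₁ : Fin m₁ → Fin d → Finset ℕ} {R₂ : Fin m₂ → Fin d → Finset ℕ} (hd : 0 < d)
    (h₁ : IsRectCoCover F₁ᶜ η₁ R₁) (h₂ : IsRectCoCover F₂ᶜ η₂ R₂)
    (hN : ∀ i k, ∀ a ∈ R₁ i k, a < N) :
    IsRectCoCover (F₁ ⊕g F₂)ᶜ (Sum.elim η₁ fun v k => η₂ v k + N)
      (Fin.append R₁ fun i => shiftRect N (R₂ i)) := by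
  have hshift : ∀ {x : Fin d → ℕ} {J : Fin d → Finset ℕ}, x ∈ rect J →
      (fun k => x k + N) ∈ rect (shiftRect N J) :=
    fun hx k => mem_image_of_mem _ (hx k)
  have hcross : ∀ i j, Disjoint (rect (R₁ i)) (rect (shiftRect N (R₂ j))) := fun i j =>
    Set.disjoint_left.2 fun x hx hx' =>
      (mem_rect_shiftRect.1 hx' ⟨0, hd⟩).1.not_gt (hN i _ _ (hx ⟨0, hd⟩))
  have hshiftDisj : ∀ i j, i ≠ j →
      Disjoint (rect (shiftRect N (R₂ i))) (rect (shiftRect N (R₂ j))) := fun i j hij =>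
    Set.disjoint_left.2 fun x hx hx' => Set.disjoint_left.1 (h₂.2.1 i j hij)
      (fun k => (mem_rect_shiftRect.1 hx k).2) (fun k => (mem_rect_shiftRect.1 hx' k).2)
  refine ⟨?_, ?_, ?_, ?_⟩
  · intro i k
    induction i using Fin.addCases with
    | left i => simpa using h₁.1 i k
    | right i => simpa [shiftRect] using h₂.1 i k
  · intro i j hij
    induction i using Fin.addCases with
    | left i =>
      induction j using Fin.addCases with
      | left j => simpa using h₁.2.1 i j (by simpa using hij)
      | right j => simpa using hcross i j
    | right i =>
      induction j using Fin.addCases with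
      | left j => simpa using (hcross j i).symm
      | right j => simpa using hshiftDisj i j (by simpa using hij)
  · rintro (u | u)
    · obtain ⟨i, hi⟩ := h₁.2.2.1 u
      exact ⟨Fin.castAdd m₂ i, by simpa using hi⟩
    · obtain ⟨i, hi⟩ := h₂.2.2.1 u
      exact ⟨Fin.natAdd m₁ i, by simpa using hshift hi⟩
  · rintro (u | u) (v | v) huv hadj
    · obtain ⟨i, hu, hv⟩ := h₁.2.2.2 u v (by simpa using huv) (by simpa using hadj)
      exact ⟨Fin.castAdd m₂ i, by simpa using hu, by simpa using hv⟩
    · exact absurd (compl_sum_adj_inl_inr u v) hadj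
    · exact absurd (compl_sum_adj_inl_inr v u).symm hadj
    · obtain ⟨i, hu, hv⟩ := h₂.2.2.2 u v (by simpa using huv) (by simpa using hadj)
      exact ⟨Fin.natAdd m₁ i, by simpa using hshift hu, by simpa using hshift hv⟩

lemma exists_isSpaceEmbedding_compl_sum_and_dVol_le [Fintype V₁] [Fintype V₂] (hd : 0 < d)
    (h₁ : ∃ η, IsSpaceEmbedding F₁ᶜ d η) (h₂ : ∃ η, IsSpaceEmbedding F₂ᶜ d η) :
    ∃ η, IsSpaceEmbedding (F₁ ⊕g F₂)ᶜ d η ∧ dVol (F₁ ⊕g F₂)ᶜ d ≤ dVol F₁ᶜ d + dVol F₂ᶜ d := by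
  obtain ⟨η₁, m₁, R₁, hη₁, hR₁, hvol₁⟩ := exists_dVol_eq h₁
  obtain ⟨η₂, m₂, R₂, hη₂, hR₂, hvol₂⟩ := exists_dVol_eq h₂
  obtain ⟨N, hN⟩ := exists_forall_mem_lt_of_finset R₁
  have hη₁N : ∀ v k, η₁ v k < N := fun v k =>
    have ⟨i, hi⟩ := hR₁.2.2.1 v
    hN i k _ (hi k)
  have hη := isSpaceEmbedding_compl_sum hd hη₁ hη₂ hη₁N
  refine ⟨_, hη, ?_⟩
  calc dVol (F₁ ⊕g F₂)ᶜ d ≤ ∑ i, rvol (Fin.append R₁ (fun i => shiftRect N (R₂ i)) i) :=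
        dVol_le hη (isRectCoCover_compl_sum hd hR₁ hR₂ hN)
    _ = dVol F₁ᶜ d + dVol F₂ᶜ d := by simp [Fin.sum_univ_add, rvol_shiftRect, hvol₁, hvol₂]

lemma exists_isSpaceEmbedding_compl_sum_iff [Fintype V₁] [Fintype V₂] (hd : 0 < d) :
    (∃ η, IsSpaceEmbedding (F₁ ⊕g F₂)ᶜ d η) ↔
      (∃ η, IsSpaceEmbedding F₁ᶜ d η) ∧ ∃ η, IsSpaceEmbedding F₂ᶜ d η :=
  ⟨fun ⟨_, hη⟩ => ⟨⟨_, hη.comp (Embedding.complEquiv Embedding.sumInl)⟩,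
      ⟨_, hη.comp (Embedding.complEquiv Embedding.sumInr)⟩⟩,
    fun ⟨h₁, h₂⟩ => (exists_isSpaceEmbedding_compl_sum_and_dVol_le hd h₁ h₂).imp fun _ => And.left⟩

lemma dVol_compl_sum [Fintype V₁] [Fintype V₂] (hd : 0 < d)
    (h : ∃ η, IsSpaceEmbedding (F₁ ⊕g F₂)ᶜ d η) :
    dVol (F₁ ⊕g F₂)ᶜ d = dVol F₁ᶜ d + dVol F₂ᶜ d := by
  obtain ⟨h₁, h₂⟩ := (exists_isSpaceEmbedding_compl_sum_iff hd).1 h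
  obtain ⟨-, -, hle⟩ := exists_isSpaceEmbedding_compl_sum_and_dVol_le hd h₁ h₂
  exact hle.antisymm (dVol_add_dVol_le hd (Embedding.complEquiv Embedding.sumInl)
    (Embedding.complEquiv Embedding.sumInr) compl_sum_adj_inl_inr h)

end Join

/-- For any two finite simple graphs `F¹, F²` and any `d ≥ 1`, the
`d`-measure is additive over disjoint unions:
`𝓗^d(F¹ ⊔ F²) = 𝓗^d(F¹) + 𝓗^d(F²)` in the extended nonnegative reals. -/
theorem graphMeasure_disjUnion {V₁ V₂ : Type*} [Fintype V₁] [Fintype V₂]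
    (F₁ : SimpleGraph V₁) (F₂ : SimpleGraph V₂) (d : ℕ) (hd : 0 < d) :
    graphMeasure (disjUnionGraph F₁ F₂) d = graphMeasure F₁ d + graphMeasure F₂ d := by
  rw [disjUnionGraph_eq_sum]
  by_cases h : ∃ η, IsSpaceEmbedding (F₁ ⊕g F₂)ᶜ d η
  · obtain ⟨h₁, h₂⟩ := (exists_isSpaceEmbedding_compl_sum_iff hd).1 h
    rw [graphMeasure, graphMeasure, graphMeasure, if_pos h, if_pos h₁, if_pos h₂,
      dVol_compl_sum hd h, Nat.cast_add]
  · rw [graphMeasure, if_neg h]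
    rcases not_and_or.1 ((exists_isSpaceEmbedding_compl_sum_iff hd).not.1 h) with h' | h' <;>
      simp [graphMeasure, h']
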